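/- The irrational rotation algebra A has no zero divisors: if a, b ∈ A with a b = 0, then a = 0 or b = 0. -/

import Mathlib

/-!
Order `ℤ × ℤ` lexicographically. For nonzero `x` and `y`, the product of the leading basis
terms of `x` and `y` cannot be cancelled by any other product of basis terms, and its
coefficient is a product of nonzero scalars, because each twisting factor `exp (i λ n₁ l₂)`
is nonzero.
-/

namespace Module.Basis

variable {G k A : Type*} [Add G] [CommSemiring k] [Semiring A] [Algebra k A]
  (b : Basis G k A) {e : G → G → k}

theorem repr_mul_eq_sum (hmul : ∀ i j, b i * b j = e i j • b (i + j)) (x y : A) :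
    b.repr (x * y) = ∑ p ∈ (b.repr x).support ×ˢ (b.repr y).support,
      Finsupp.single (p.1 + p.2) (b.repr x p.1 * b.repr y p.2 * e p.1 p.2) := by
  conv_lhs => rw [← b.linearCombination_repr x, ← b.linearCombination_repr y]
  simp only [Finsupp.linearCombination_apply, Finsupp.sum, Finset.sum_mul_sum,
    ← Finset.sum_product', map_sum]
  refine Finset.sum_congr rfl fun p _ => ?_
  rw [smul_mul_smul_comm, hmul, smul_smul, map_smul, repr_self, Finsupp.smul_single_one]

theorem repr_mul_apply_add_of_uniqueAdd (hmul : ∀ i j, b i * b j = e i j • b (i + j))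
    {x y : A} {i j : G} (hi : i ∈ (b.repr x).support) (hj : j ∈ (b.repr y).support)
    (h : UniqueAdd (b.repr x).support (b.repr y).support i j) :
    b.repr (x * y) (i + j) = b.repr x i * b.repr y j * e i j := by
  rw [repr_mul_eq_sum b hmul, Finsupp.finsetSum_apply,
    Finset.sum_eq_single_of_mem (i, j) (Finset.mk_mem_product hi hj)]
  · exact Finsupp.single_eq_same
  · rintro ⟨i', j'⟩ hp hne
    rw [Finset.mem_product] at hp
    exact Finsupp.single_eq_of_ne fun hsum => hne (Prod.ext_iff.mpr (h hp.1 hp.2 hsum.symm))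

theorem noZeroDivisors_of_mul_eq_smul [UniqueSums G] [NoZeroDivisors k]
    (hmul : ∀ i j, b i * b j = e i j • b (i + j)) (he : ∀ i j, e i j ≠ 0) :
    NoZeroDivisors A where
  eq_zero_or_eq_zero_of_mul_eq_zero {x y} hxy := by
    by_contra! hne
    have hx : (b.repr x).support.Nonempty := by simpa using hne.1
    have hy : (b.repr y).support.Nonempty := by simpa using hne.2
    obtain ⟨i, hi, j, hj, huniq⟩ := UniqueSums.uniqueAdd_of_nonempty hx hy
    have hcoeff := repr_mul_apply_add_of_uniqueAdd b hmul hi hj huniq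
    rw [hxy, map_zero, Finsupp.zero_apply] at hcoeff
    exact mul_ne_zero (mul_ne_zero (Finsupp.mem_support_iff.mp hi)
      (Finsupp.mem_support_iff.mp hj)) (he i j) hcoeff.symm

end Module.Basis

theorem rotationAlgebra_no_zero_divisors
    (lam : ℝ)
    (A : Type) [Ring A] [Algebra ℂ A]
    (a : ℤ → ℤ → A)
    (b : Module.Basis (ℤ × ℤ) ℂ A) (hb : ∀ n l : ℤ, b (n, l) = a n l)
    (hmul : ∀ n₁ l₁ n₂ l₂ : ℤ,
      a n₁ l₁ * a n₂ l₂ =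
        Complex.exp (Complex.I * (lam * n₁ * l₂)) • a (n₁ + n₂) (l₁ + l₂)) :
    ∀ x y : A, x * y = 0 → x = 0 ∨ y = 0 := by
  have hbmul : ∀ i j : ℤ × ℤ,
      b i * b j = Complex.exp (Complex.I * (lam * i.1 * j.2)) • b (i + j) := by
    rintro ⟨n₁, l₁⟩ ⟨n₂, l₂⟩
    simpa only [Prod.mk_add_mk, hb] using hmul n₁ l₁ n₂ l₂
  have := b.noZeroDivisors_of_mul_eq_smul hbmul fun _ _ => Complex.exp_ne_zero _
  exact fun _ _ => eq_zero_or_eq_zero_of_mul_eq_zero
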